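/- For the sequentially numbered path graph on n ≥ 2 vertices, the min-ID contraction procedure (repeatedly replacing each vertex by the minimum ID in its closed neighbourhood) requires exactly n − 1 iterations to contract the graph to a single vertex. -/

import Mathlib

/-- The path graph on `Fin n` with edges between consecutive vertices. -/
def pathGraph' (n : ℕ) : SimpleGraph (Fin n) where
  Adj i j := i.val + 1 = j.val ∨ j.val + 1 = i.val
  symm := by constructor; rintro i j (h | h) <;> [right; left] <;> exact h
  loopless := by constructor; rintro i (h | h) <;> omega

/-- The contracted graph: edges join distinct representatives of adjacent vertices. -/
def contractedGraph {V : Type*} (G : SimpleGraph V) (r : V → V) : SimpleGraph V where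
  Adj a b := a ≠ b ∧ ∃ v w : V, G.Adj v w ∧ r v = a ∧ r w = b
  symm := by
    constructor
    rintro a b ⟨hab, v, w, hvw, hv, hw⟩
    exact ⟨hab.symm, w, v, hvw.symm, hw, hv⟩
  loopless := by constructor; rintro a ⟨h, -⟩; exact h rfl

/-- `minRep G v` is the minimum-ID vertex in the closed neighbourhood of `v`. -/
noncomputable def minRep {n : ℕ} (G : SimpleGraph (Fin n)) (v : Fin n) : Fin n :=
  letI : DecidableRel G.Adj := Classical.decRel _
  (insert v (G.neighborFinset v)).min' (Finset.insert_nonempty _ _)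

/-- The sequence of graphs obtained by repeatedly applying min-ID contraction to the
sequentially numbered path graph on `n` vertices. -/
noncomputable def minIter (n : ℕ) : ℕ → SimpleGraph (Fin n)
  | 0 => pathGraph' n
  | i + 1 => contractedGraph (minIter n i) (minRep (minIter n i))

/-
Invariant: after `k` rounds the graph is the path on the first `n - k` vertices, all others being
isolated. Every vertex `v` of that path is represented by `v - 1`, so the edge `{v, v+1}` becomes
`{v-1, v}` and the path loses exactly its last vertex in each round.
-/

lemma minRep_eq_of_le {n : ℕ} {G : SimpleGraph (Fin n)} {v w : Fin n} (hw : w = v ∨ G.Adj v w)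
    (hwv : w ≤ v) (hle : ∀ x, G.Adj v x → w ≤ x) : minRep G v = w := by
  classical
  refine le_antisymm (Finset.min'_le _ _ ?_) (Finset.le_min' _ _ _ ?_)
  · simpa [SimpleGraph.mem_neighborFinset] using hw
  · simp only [Finset.mem_insert, SimpleGraph.mem_neighborFinset, forall_eq_or_imp]
    exact ⟨hwv, hle⟩

def pathPrefix (n m : ℕ) : SimpleGraph (Fin n) where
  Adj a b := (pathGraph' n).Adj a b ∧ a.val < m ∧ b.val < m
  symm := ⟨fun _ _ h => ⟨h.1.symm, h.2.2, h.2.1⟩⟩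
  loopless := ⟨fun _ h => h.1.ne rfl⟩

lemma pathPrefix_adj {n m : ℕ} {a b : Fin n} :
    (pathPrefix n m).Adj a b ↔ (a.val + 1 = b.val ∨ b.val + 1 = a.val) ∧ a.val < m ∧ b.val < m :=
  Iff.rfl

lemma val_minRep_pathPrefix {n m : ℕ} (v : Fin n) :
    (minRep (pathPrefix n m) v).val = if v.val < m then v.val - 1 else v.val := by
  split_ifs with hv
  · rw [minRep_eq_of_le (w := ⟨v.val - 1, by omega⟩)]
    · rcases Nat.eq_zero_or_pos v.val with h0 | h0
      · exact Or.inl (Fin.ext (by simp [h0]))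
      · exact Or.inr (pathPrefix_adj.2 ⟨Or.inr (by simp; omega), hv, by simp; omega⟩)
    · exact Fin.mk_le_of_le_val (by omega)
    · intro x hx
      rw [pathPrefix_adj] at hx
      exact Fin.mk_le_of_le_val (by omega)
  · rw [minRep_eq_of_le (Or.inl rfl) le_rfl fun x hx => absurd (pathPrefix_adj.1 hx).2.1 hv]

lemma contractedGraph_pathPrefix {n m : ℕ} (hm : m ≤ n) :
    contractedGraph (pathPrefix n m) (minRep (pathPrefix n m)) = pathPrefix n (m - 1) := by
  ext a b
  constructor
  · rintro ⟨hab, v, w, hvw, rfl, rfl⟩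
    have hne : (minRep (pathPrefix n m) v).val ≠ (minRep (pathPrefix n m) w).val :=
      fun h => hab (Fin.ext h)
    rw [pathPrefix_adj] at hvw ⊢
    rw [val_minRep_pathPrefix, if_pos hvw.2.1] at hne ⊢
    rw [val_minRep_pathPrefix, if_pos hvw.2.2] at hne ⊢
    omega
  · -- the edge `{a, a+1}` is the image of the edge `{a+1, a+2}`
    have key : ∀ a b : Fin n, a.val + 1 = b.val → b.val < m - 1 →
        (contractedGraph (pathPrefix n m) (minRep (pathPrefix n m))).Adj a b := by
      intro a b hab hb
      refine ⟨fun h => by simp [h] at hab, ⟨a.val + 1, by omega⟩, ⟨b.val + 1, by omega⟩,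
        pathPrefix_adj.2 ⟨Or.inl (by simp [hab]), by simp; omega, by simp; omega⟩,
        Fin.ext ?_, Fin.ext ?_⟩ <;>
      · rw [val_minRep_pathPrefix, if_pos (by simp; omega)]
        simp
    intro h
    rw [pathPrefix_adj] at h
    obtain ⟨hab | hba, ha, hb⟩ := h
    · exact key a b hab hb
    · exact (key b a hba ha).symm

lemma minIter_eq_pathPrefix (n k : ℕ) : minIter n k = pathPrefix n (n - k) := by
  induction k with
  | zero => ext a b; simp [minIter, pathPrefix_adj, pathGraph']
  | succ k ih => rw [minIter, ih, contractedGraph_pathPrefix (Nat.sub_le n k), Nat.sub_sub]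

theorem stmt_11_general (n : ℕ) :
    (∀ a b : Fin n, ¬ (minIter n (n - 1)).Adj a b) ∧
    (∀ k < n - 1, ∃ a b : Fin n, (minIter n k).Adj a b) := by
  simp only [minIter_eq_pathPrefix, pathPrefix_adj]
  exact ⟨fun a b h => by omega,
    fun k hk => ⟨⟨0, by omega⟩, ⟨1, by omega⟩, Or.inl rfl, by simp only; omega, by simp only; omega⟩⟩

/-- The sequentially numbered path graph on `n ≥ 2` vertices needs exactly `n - 1`
min-ID contraction iterations to be contracted to a single vertex: after `n - 1`
steps no edges remain, while before that some edge is still present. -/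
theorem stmt_11 (n : ℕ) (hn : 2 ≤ n) :
    (∀ a b : Fin n, ¬ (minIter n (n - 1)).Adj a b) ∧
    (∀ k < n - 1, ∃ a b : Fin n, (minIter n k).Adj a b) :=
  stmt_11_general n
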